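/- Let v = 1u0 be a type α Dyck word of length n (so u is a Dyck word of length n−2), and let B = 01w where w is a Dyck word of length n−2 with w ≠ u. Then no nonempty proper prefix of v equals a nonempty proper suffix of B, and no nonempty proper prefix of B of length greater than 1 equals a nonempty proper suffix of v. -/

import Mathlib

/-- number of 1's in a binary word (1 = `true`) -/
def ones (w : List Bool) : ℕ := w.count true

/-- number of 0's in a binary word (0 = `false`) -/
def zeros (w : List Bool) : ℕ := w.count false

/-- Dyck word: equally many 1's and 0's, every prefix has at least as many 1's as 0's. -/
def IsDyck (w : List Bool) : Prop :=
  ones w = zeros w ∧ ∀ γ : List Bool, γ <+: w → zeros γ ≤ ones γ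

/-- type α Dyck word: a Dyck word all of whose nonempty proper prefixes have
strictly more 1's than 0's. -/
def IsAlphaDyck (v : List Bool) : Prop :=
  IsDyck v ∧ ∀ γ : List Bool, γ <+: v → γ ≠ [] → γ ≠ v → zeros γ < ones γ

/-- two strings are non-overlapping: no nonempty proper prefix of either equals a
nonempty proper suffix of the other. -/
def NonOverlapping (x y : List Bool) : Prop :=
  ∀ s : List Bool, s ≠ [] →
    ¬(s <+: x ∧ s ≠ x ∧ s <:+ y ∧ s ≠ y) ∧
    ¬(s <+: y ∧ s ≠ y ∧ s <:+ x ∧ s ≠ x)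

/-!
Compare 1's and 0's. A nonempty proper prefix of the type α word `v` has more 1's than 0's, and
its complementary suffix has more 0's than 1's; in the Dyck word `w` every prefix has at least as
many 1's and every suffix at least as many 0's.

A proper suffix `s` of `01w` is either `1w` or a suffix of `w`. If `s = 1w` is a prefix of
`v = 1u0`, then `w` is a prefix of `u0` of the length of `u`, so `w = u`. If `s` is a suffix of `w`,
it cannot also be a nonempty proper prefix of `v`. A prefix of `01w` of length at least 2 is `01t`
with `t` a prefix of `w`, so it has at least as many 1's as 0's and cannot be a nonempty proper
suffix of `v`.
-/

lemma ones_append (a b : List Bool) : ones (a ++ b) = ones a + ones b :=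
  List.count_append ..

lemma zeros_append (a b : List Bool) : zeros (a ++ b) = zeros a + zeros b :=
  List.count_append ..

theorem IsDyck.ones_le_zeros_of_suffix {w s : List Bool} (hw : IsDyck w) (hs : s <:+ w) :
    ones s ≤ zeros s := by
  obtain ⟨p, rfl⟩ := hs
  have hp := hw.2 p (List.prefix_append p s)
  have hbal := hw.1
  rw [ones_append, zeros_append] at hbal
  omega

theorem IsAlphaDyck.ones_lt_zeros_of_suffix {v s : List Bool} (hv : IsAlphaDyck v)
    (hs : s <:+ v) (hne : s ≠ []) (hsv : s ≠ v) : ones s < zeros s := by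
  obtain ⟨p, rfl⟩ := hs
  have hp : zeros p < ones p :=
    hv.2 p (List.prefix_append p s) (by rintro rfl; exact hsv rfl)
      (fun h => hne (List.append_right_eq_self.1 h.symm))
  have hbal := hv.1.1
  rw [ones_append, zeros_append] at hbal
  omega

theorem List.IsPrefix.eq_of_prefix_append_of_length_eq {α : Type*} {w u l : List α}
    (h : w <+: u ++ l) (hlen : w.length = u.length) : w = u :=
  (List.prefix_of_prefix_length_le h (List.prefix_append u l) hlen.le).eq_of_length hlen

theorem alpha_type4_overlap_restrictions_general (n : ℕ) (u v w B : List Bool)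
    (hv : v = true :: (u ++ [false])) (hα : IsAlphaDyck v)
    (hul : u.length = n - 2)
    (hw : IsDyck w) (hwl : w.length = n - 2) (hwu : w ≠ u)
    (hB : B = false :: true :: w) :
    (∀ s : List Bool, s ≠ [] → s <+: v → s ≠ v → ¬(s <:+ B ∧ s ≠ B)) ∧
    (∀ s : List Bool, 1 < s.length → s <+: B → s ≠ B → ¬(s <:+ v ∧ s ≠ v)) := by
  subst hB
  constructor
  · rintro s hne hpre hsv ⟨hsuf, hsB⟩
    rcases List.suffix_cons_iff.1 hsuf with rfl | hsuf
    · exact hsB rfl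
    rcases List.suffix_cons_iff.1 hsuf with rfl | hsuf
    · rw [hv, List.cons_prefix_cons] at hpre
      exact hwu (hpre.2.eq_of_prefix_append_of_length_eq (hwl.trans hul.symm))
    · exact (hα.2 s hpre hne hsv).not_ge (hw.ones_le_zeros_of_suffix hsuf)
  · rintro (_ | ⟨a, _ | ⟨b, t⟩⟩) hlen hpre - ⟨hsuf, hsv⟩
    · simp at hlen
    · simp at hlen
    obtain ⟨rfl, rfl, ht⟩ : a = false ∧ b = true ∧ t <+: w := by
      simpa only [List.cons_prefix_cons] using hpre
    have h01t := hα.ones_lt_zeros_of_suffix hsuf (List.cons_ne_nil _ _) hsv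
    have ht := hw.2 t ht
    simp [ones, zeros] at h01t ht
    omega

/-- for v = 1u0 type α of length n and B = 01w with w Dyck of length n−2, w ≠ u:
no nonempty proper prefix of v is a nonempty proper suffix of B, and no nonempty proper prefix
of B of length > 1 is a nonempty proper suffix of v. -/
theorem alpha_type4_overlap_restrictions (n : ℕ) (u v w B : List Bool)
    (hv : v = true :: (u ++ [false])) (hα : IsAlphaDyck v) (hvlen : v.length = n)
    (hu : IsDyck u) (hul : u.length = n - 2)
    (hw : IsDyck w) (hwl : w.length = n - 2) (hwu : w ≠ u)
    (hB : B = false :: true :: w) :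
    (∀ s : List Bool, s ≠ [] → s <+: v → s ≠ v → ¬(s <:+ B ∧ s ≠ B)) ∧
    (∀ s : List Bool, 1 < s.length → s <+: B → s ≠ B → ¬(s <:+ v ∧ s ≠ v)) :=
  alpha_type4_overlap_restrictions_general n u v w B hv hα hul hw hwl hwu hB
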